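/- arXiv:math/0411459 — 2 statements merged into one kernel-verified Lean document; each statement's English description precedes it below -/
import Mathlib

section
/- Let C, D, E ⊆ B_n = {0,…,n-1}^d with C and D nonempty, connected (in the nearest-neighbour graph), disjoint, and suppose E properly separates C and D in B_n (every nearest-neighbour path in B_n from C to D meets E at a point outside C ∪ D). Then |E| ≥ (1/(2d)) · min{ |C|^{1-1/d}, |D|^{1-1/d} }. -/
open MeasureTheory ProbabilityTheory Filter

/-- Sites of the lattice `ℤ^d`. -/
abbrev Pt (d : ℕ) := Fin d → ℤ

/-- Nearest-neighbour adjacency in `ℤ^d`: the two sites differ by `1` in exactly one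
coordinate. -/
def nnAdj {d : ℕ} (x y : Pt d) : Prop := (∑ i, (x i - y i).natAbs) = 1

/-- A set of sites is connected in the nearest-neighbour graph. -/
def connSet {d : ℕ} (A : Set (Pt d)) : Prop :=
  ∀ x ∈ A, ∀ y ∈ A, Relation.ReflTransGen (fun a b => nnAdj a b ∧ a ∈ A ∧ b ∈ A) x y

/-- A finite set of sites is connected in the nearest-neighbour graph. -/
def connFinset {d : ℕ} (A : Finset (Pt d)) : Prop := connSet (A : Set (Pt d))

/-- The box `B_n = {0, …, n-1}^d`. -/
noncomputable def boxF (d n : ℕ) : Finset (Pt d) := Fintype.piFinset fun _ => Finset.Ico (0:ℤ) (n:ℤ)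

/-- `x` lies in the box `{0,…,n-1}^d`. -/
def inBox (d n : ℕ) (x : Pt d) : Prop := ∀ i, 0 ≤ x i ∧ x i < (n:ℤ)

/-!
Let `A` be the set of sites reachable from `C` by box paths that avoid `E \ (C ∪ D)`. Then
`C ⊆ A`, the separation hypothesis puts `D` in `B_n \ A`, and every box edge leaving `A` ends
in `E`; so it suffices to bound the edge boundary of whichever of `A`, `B_n \ A` has at most
half of the box.

For such a set `A`, the discrete Loomis–Whitney inequality `|A|^{d-1} ≤ ∏ᵢ |πᵢ A|` yields a
direction `i` with `|πᵢ A| ≥ |A|^{1-1/d}`. Each line in direction `i` that meets `A` either lies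
in `A`, which happens for at most `|A|/n` lines, or carries a boundary edge and hence a point of
`E`. Since `|A| ≤ n^d/2` gives `|A|/n ≤ (1 - 1/(2d)) |A|^{1-1/d}`, at least `|A|^{1-1/d}/(2d)`
lines carry a point of `E`.
-/

open Finset
open scoped ENNReal

namespace ENNReal

theorem sum_prod_rpow_le_prod_sum_rpow {α ι : Type*} (t : Finset α) (s : Finset ι)
    (f : ι → α → ℝ≥0∞) {p : ι → ℝ} (hp : ∑ i ∈ s, p i = 1) (h2p : ∀ i ∈ s, 0 ≤ p i) :
    ∑ a ∈ t, ∏ i ∈ s, f i a ^ p i ≤ ∏ i ∈ s, (∑ a ∈ t, f i a) ^ p i := by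
  let _ : MeasurableSpace t := ⊤
  have := lintegral_prod_norm_pow_le (μ := Measure.count) s
    (f := fun i (a : t) => f i a) (fun _ _ => measurable_from_top.aemeasurable) hp h2p
  simpa only [lintegral_count, tsum_fintype, sum_coe_sort,
    sum_coe_sort t fun a => ∏ i ∈ s, f i a ^ p i] using this

theorem pow_sum_le_mul_prod_sum {α ι : Type*} (V : Finset α) {s : Finset ι} (hs : s.Nonempty)
    (a : α → ℝ≥0∞) (c : ℝ≥0∞) (q : ι → α → ℝ≥0∞)
    (h : ∀ t ∈ V, a t ^ #s ≤ c * ∏ i ∈ s, q i t) :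
    (∑ t ∈ V, a t) ^ #s ≤ c * ∏ i ∈ s, ∑ t ∈ V, q i t := by
  have hk : (0 : ℝ) < #s := by exact_mod_cast hs.card_pos
  have hr : (0 : ℝ) ≤ (#s : ℝ)⁻¹ := by positivity
  have hroot : ∀ t ∈ V, a t ≤ c ^ (#s : ℝ)⁻¹ * ∏ i ∈ s, q i t ^ (#s : ℝ)⁻¹ := fun t ht => by
    rw [prod_rpow_of_nonneg hr, ← mul_rpow_of_nonneg _ _ hr, le_rpow_inv_iff hk, rpow_natCast]
    exact h t ht
  have hholder : ∑ t ∈ V, ∏ i ∈ s, q i t ^ (#s : ℝ)⁻¹ ≤ ∏ i ∈ s, (∑ t ∈ V, q i t) ^ (#s : ℝ)⁻¹ :=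
    sum_prod_rpow_le_prod_sum_rpow V s q (by simp [hk.ne']) fun _ _ => hr
  have : ∑ t ∈ V, a t ≤ (c * ∏ i ∈ s, ∑ t ∈ V, q i t) ^ (#s : ℝ)⁻¹ := calc
    ∑ t ∈ V, a t ≤ c ^ (#s : ℝ)⁻¹ * ∑ t ∈ V, ∏ i ∈ s, q i t ^ (#s : ℝ)⁻¹ := by
      rw [mul_sum]; exact sum_le_sum hroot
    _ ≤ c ^ (#s : ℝ)⁻¹ * ∏ i ∈ s, (∑ t ∈ V, q i t) ^ (#s : ℝ)⁻¹ := by gcongr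
    _ = (c * ∏ i ∈ s, ∑ t ∈ V, q i t) ^ (#s : ℝ)⁻¹ := by
      rw [prod_rpow_of_nonneg hr, mul_rpow_of_nonneg _ _ hr]
  rwa [le_rpow_inv_iff hk, rpow_natCast] at this

end ENNReal

theorem Real.rpow_one_sub_inv_le_of_pow_le {a M : ℝ} (ha : 0 ≤ a) (hM : 0 ≤ M) {k : ℕ}
    (hk : 0 < k) (h : a ^ (k - 1) ≤ M ^ k) : a ^ (1 - 1 / (k : ℝ)) ≤ M := by
  rw [← pow_le_pow_iff_left₀ (Real.rpow_nonneg ha _) hM hk.ne', ← Real.rpow_mul_natCast ha]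
  have : (1 - 1 / (k : ℝ)) * k = ((k - 1 : ℕ) : ℝ) := by
    rw [Nat.cast_sub hk, sub_mul, one_div_mul_cancel (by positivity)]; simp
  rwa [this, Real.rpow_natCast]

theorem div_le_one_sub_mul_rpow {d n : ℕ} (hd : 1 ≤ d) (hn : 0 < n) {a : ℝ} (ha : 0 ≤ a)
    (h : 2 * a ≤ (n : ℝ) ^ d) :
    a / n ≤ (1 - 1 / (2 * (d : ℝ))) * a ^ (1 - 1 / (d : ℝ)) := by
  have hdR : (1 : ℝ) ≤ d := by exact_mod_cast hd
  have hc : 0 ≤ 1 - 1 / (2 * (d : ℝ)) := by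
    rw [sub_nonneg, div_le_one (by positivity)]; linarith
  have hbernoulli : 1 / 2 ≤ (1 - 1 / (2 * (d : ℝ))) ^ d := by
    have := one_add_mul_le_pow (a := -(1 / (2 * (d : ℝ)))) (by linarith) d
    rwa [← sub_eq_add_neg, show 1 + (d : ℝ) * -(1 / (2 * d)) = 1 / 2 by field_simp; ring] at this
  have hroot : a ^ (1 / (d : ℝ)) ≤ n * (1 - 1 / (2 * (d : ℝ))) := by
    rw [one_div, Real.rpow_inv_le_iff_of_pos ha (by positivity) (by positivity),
      Real.rpow_natCast, mul_pow]
    nlinarith [pow_nonneg (Nat.cast_nonneg (α := ℝ) n) d]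
  have hsplit : a = a ^ (1 - 1 / (d : ℝ)) * a ^ (1 / (d : ℝ)) := by
    rw [← Real.rpow_add' ha (by norm_num), sub_add_cancel, Real.rpow_one]
  rw [div_le_iff₀ (by positivity)]
  calc a = a ^ (1 - 1 / (d : ℝ)) * a ^ (1 / (d : ℝ)) := hsplit
    _ ≤ a ^ (1 - 1 / (d : ℝ)) * (n * (1 - 1 / (2 * (d : ℝ)))) := by gcongr
    _ = (1 - 1 / (2 * (d : ℝ))) * a ^ (1 - 1 / (d : ℝ)) * n := by ring

theorem Int.iff_of_forall_iff_add_one {P : ℤ → Prop} {lo hi : ℤ}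
    (h : ∀ u, lo ≤ u → u + 1 < hi → (P u ↔ P (u + 1))) :
    ∀ a ∈ Ico lo hi, ∀ b ∈ Ico lo hi, P a ↔ P b := by
  suffices hlo : ∀ t ∈ Ico lo hi, P t ↔ P lo by
    intro a ha b hb; rw [hlo a ha, hlo b hb]
  intro t ht
  obtain ⟨hlot, hthi⟩ := mem_Ico.1 ht
  induction t, hlot using Int.leInduction with
  | base => rfl
  | succ t hlot ih => exact (h t hlot hthi).symm.trans (ih (mem_Ico.2 ⟨hlot, by omega⟩) (by omega))

theorem Relation.ReflTransGen.exists_seq {α : Type*} {r : α → α → Prop} {a b : α}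
    (h : ReflTransGen r a b) :
    ∃ (k : ℕ) (p : ℕ → α), p 0 = a ∧ p k = b ∧ ∀ j < k, r (p j) (p (j + 1)) := by
  induction h with
  | refl => exact ⟨0, fun _ => a, rfl, rfl, by omega⟩
  | @tail b c _ hbc ih =>
    obtain ⟨k, p, h0, hk, hp⟩ := ih
    refine ⟨k + 1, fun j => if j ≤ k then p j else c, by simpa using h0, by simp, fun j hj => ?_⟩
    rcases Nat.lt_succ_iff_lt_or_eq.1 hj with hj | rfl
    · simpa [hj.le, Nat.succ_le_of_lt hj] using hp j hj
    · simpa [hk] using hbc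

theorem Finset.sum_card_image_filter_le {β γ : Type*} [DecidableEq β] [DecidableEq γ]
    (A : Finset β) (V : Finset γ) (f : β → β) (g : β → γ) (hfg : ∀ x, g (f x) = g x) :
    ∑ t ∈ V, #((A.filter (g · = t)).image f) ≤ #(A.image f) := by
  rw [← card_biUnion]
  · exact card_le_card (biUnion_subset.2 fun t _ => image_subset_image (filter_subset _ _))
  · intro t _ u _ htu
    refine disjoint_left.2 fun y hyt hyu => htu ?_
    obtain ⟨x, hx, rfl⟩ := mem_image.1 hyt
    obtain ⟨x', hx', hxx'⟩ := mem_image.1 hyu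
    rw [← (mem_filter.1 hx).2, ← (mem_filter.1 hx').2, ← hfg x, ← hfg x', hxx']

section LoomisWhitney

variable {ι α : Type*} [DecidableEq ι] [Zero α]

def eraseCoord (i : ι) (x : ι → α) : ι → α := Function.update x i 0

@[simp] theorem eraseCoord_apply_self (i : ι) (x : ι → α) : eraseCoord i x i = 0 :=
  Function.update_self i 0 x

theorem eraseCoord_apply_of_ne {i j : ι} (h : j ≠ i) (x : ι → α) : eraseCoord i x j = x j :=
  Function.update_of_ne h 0 x

theorem eraseCoord_injOn (i : ι) (t : α) : Set.InjOn (eraseCoord i) {x : ι → α | x i = t} := by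
  intro x hx y hy hxy
  funext j
  by_cases hj : j = i
  · subst hj; exact hx.trans hy.symm
  · simpa only [eraseCoord_apply_of_ne hj] using congrFun hxy j

theorem eraseCoord_update_eraseCoord (i : ι) (x : ι → α) (t : α) :
    eraseCoord i (Function.update (eraseCoord i x) i t) = eraseCoord i x := by
  simp [eraseCoord]

variable [DecidableEq (ι → α)]

theorem card_filter_le_card_image_eraseCoord [DecidableEq α] (A : Finset (ι → α)) (i : ι)
    (t : α) : #(A.filter (· i = t)) ≤ #(A.image (eraseCoord i)) :=
  card_le_card_of_injOn _ (fun _ hx => mem_image_of_mem _ (mem_filter.1 hx).1)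
    ((eraseCoord_injOn i t).mono fun _ hx => (mem_filter.1 hx).2)

/-- Induction on `s`: slice `A` along a new coordinate `i₀`; each slice obeys the induction
hypothesis and injects into `πᵢ₀ A`, and Hölder's inequality sums the slice bounds. -/
theorem card_pow_le_prod_card_image_eraseCoord (s : Finset ι) :
    ∀ A : Finset (ι → α), A.Nonempty → (∀ x ∈ A, ∀ y ∈ A, ∀ i ∉ s, x i = y i) →
      #A ^ (#s - 1) ≤ ∏ i ∈ s, #(A.image (eraseCoord i)) := by
  classical
  induction s using Finset.induction_on with
  | empty => simp
  | insert i₀ s hi₀ ih =>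
    intro A hA hconst
    rw [card_insert_of_notMem hi₀, Nat.add_sub_cancel, prod_insert hi₀]
    rcases s.eq_empty_or_nonempty with rfl | hs
    · simpa using hA.image (eraseCoord i₀)
    set V := A.image fun x : ι → α => x i₀
    set slice : α → Finset (ι → α) := fun t => A.filter (· i₀ = t)
    have hslice_ih : ∀ t ∈ V, #(slice t) ^ (#s - 1) ≤
        ∏ i ∈ s, #((slice t).image (eraseCoord i)) := by
      intro t ht
      obtain ⟨x, hx, rfl⟩ := mem_image.1 ht
      refine ih _ ⟨x, mem_filter.2 ⟨hx, rfl⟩⟩ fun y hy z hz i hi => ?_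
      by_cases hii : i = i₀
      · subst hii; exact (mem_filter.1 hy).2.trans (mem_filter.1 hz).2.symm
      · exact hconst y (mem_filter.1 hy).1 z (mem_filter.1 hz).1 i (by simp [hii, hi])
    have hsum : ∀ i ∈ s, ∑ t ∈ V, #((slice t).image (eraseCoord i)) ≤
        #(A.image (eraseCoord i)) := fun i hi =>
      sum_card_image_filter_le A V (eraseCoord i) (· i₀) fun x =>
        eraseCoord_apply_of_ne (ne_of_mem_of_not_mem hi hi₀).symm x
    have hholder := ENNReal.pow_sum_le_mul_prod_sum V hs (fun t => #(slice t))
      #(A.image (eraseCoord i₀)) (fun i t => #((slice t).image (eraseCoord i))) fun t ht => by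
        have : #(slice t) ^ #s ≤ #(A.image (eraseCoord i₀)) *
            ∏ i ∈ s, #((slice t).image (eraseCoord i)) := by
          rw [← Nat.sub_add_cancel hs.card_pos, pow_succ, mul_comm]
          exact Nat.mul_le_mul (card_filter_le_card_image_eraseCoord A i₀ t) (hslice_ih t ht)
        exact_mod_cast this
    have hA : #A = ∑ t ∈ V, #(slice t) := card_eq_sum_card_image _ _
    have : #A ^ #s ≤ #(A.image (eraseCoord i₀)) *
        ∏ i ∈ s, ∑ t ∈ V, #((slice t).image (eraseCoord i)) := by
      rw [hA]; exact_mod_cast hholder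
    exact this.trans (Nat.mul_le_mul_left _ (prod_le_prod' hsum))

variable [Fintype ι]

theorem card_pow_le_prod_card_image_eraseCoord_univ (A : Finset (ι → α)) (hA : A.Nonempty) :
    #A ^ (Fintype.card ι - 1) ≤ ∏ i, #(A.image (eraseCoord i)) :=
  card_pow_le_prod_card_image_eraseCoord univ A hA (by simp)

theorem exists_rpow_le_card_image_eraseCoord [Nonempty ι] (A : Finset (ι → α))
    (hA : A.Nonempty) :
    ∃ i, (#A : ℝ) ^ (1 - 1 / (Fintype.card ι : ℝ)) ≤ #(A.image (eraseCoord i)) := by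
  obtain ⟨i, -, hmax⟩ := exists_max_image univ (fun i => #(A.image (eraseCoord i))) univ_nonempty
  refine ⟨i, Real.rpow_one_sub_inv_le_of_pow_le (by positivity) (by positivity)
    Fintype.card_pos ?_⟩
  have := (card_pow_le_prod_card_image_eraseCoord_univ A hA).trans
    (prod_le_pow_card univ _ _ fun j _ => hmax j (mem_univ j))
  exact_mod_cast this

end LoomisWhitney

section Box

variable {d n : ℕ}

theorem mem_boxF {x : Pt d} : x ∈ boxF d n ↔ inBox d n x := by
  simp [boxF, inBox]

theorem card_boxF : #(boxF d n) = n ^ d := by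
  simp [boxF]

theorem nnAdj_comm {x y : Pt d} : nnAdj x y ↔ nnAdj y x := by
  simp only [nnAdj, ← Int.natAbs_neg (x _ - y _), neg_sub]

theorem nnAdj_update_add_one (z : Pt d) (i : Fin d) (u : ℤ) :
    nnAdj (Function.update z i u) (Function.update z i (u + 1)) := by
  rw [nnAdj, sum_eq_single i (fun j _ hj => by simp [hj]) (by simp)]
  simp

/-- Feet `z` (with `z i = 0`) of the lines in direction `i` whose part in the box lies in `A`. -/
noncomputable def fullLines (n : ℕ) (i : Fin d) (A : Finset (Pt d)) : Finset (Pt d) :=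
  (A.image (eraseCoord i)).filter fun z => ∀ t ∈ Ico (0 : ℤ) n, Function.update z i t ∈ A

theorem card_fullLines_mul_le (i : Fin d) (A : Finset (Pt d)) : #(fullLines n i A) * n ≤ #A := by
  have hfoot : ∀ z ∈ fullLines n i A, eraseCoord i z = z := by
    intro z hz
    obtain ⟨x, -, rfl⟩ := mem_image.1 (mem_filter.1 hz).1
    simp [eraseCoord]
  have := card_le_card_of_injOn (s := fullLines n i A ×ˢ Ico (0 : ℤ) n)
    (fun p => Function.update p.1 i p.2)
    (fun p hp => (mem_filter.1 (mem_product.1 hp).1).2 p.2 (mem_product.1 hp).2)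
    (fun p hp q hq hpq => by
      have hfst : eraseCoord i p.1 = eraseCoord i q.1 := by
        simpa [eraseCoord] using congrArg (eraseCoord i) hpq
      rw [hfoot p.1 (mem_product.1 hp).1, hfoot q.1 (mem_product.1 hq).1] at hfst
      exact Prod.ext hfst (by simpa using congrFun hpq i))
  simpa using this

theorem image_eraseCoord_sdiff_fullLines_subset {A W : Finset (Pt d)} (hA : A ⊆ boxF d n)
    (hW : ∀ x ∈ A, ∀ y ∈ boxF d n, y ∉ A → nnAdj x y → x ∈ W ∨ y ∈ W) (i : Fin d) :
    A.image (eraseCoord i) \ fullLines n i A ⊆ W.image (eraseCoord i) := by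
  intro z hz
  obtain ⟨hzA, hzfull⟩ := mem_sdiff.1 hz
  obtain ⟨x, hx, rfl⟩ := mem_image.1 hzA
  set line : ℤ → Pt d := fun t => Function.update (eraseCoord i x) i t
  have hline_box : ∀ t ∈ Ico (0 : ℤ) n, line t ∈ boxF d n := fun t ht => mem_boxF.2 fun j => by
    by_cases hj : j = i
    · subst hj; simpa [line] using mem_Ico.1 ht
    · simpa [line, hj, eraseCoord_apply_of_ne] using mem_boxF.1 (hA hx) j
  have hline_W : ∀ t, line t ∈ W → eraseCoord i x ∈ W.image (eraseCoord i) := fun t ht =>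
    mem_image.2 ⟨line t, ht, eraseCoord_update_eraseCoord i x t⟩
  by_contra hzW
  refine hzfull (mem_filter.2 ⟨hzA, fun t ht => ?_⟩)
  have hx_line : line (x i) = x := by simp [line, eraseCoord]
  have hxi : x i ∈ Ico (0 : ℤ) n := mem_Ico.2 (mem_boxF.1 (hA hx) i)
  refine (Int.iff_of_forall_iff_add_one (P := (line · ∈ A)) (fun u hu hun => ?_)
    (x i) hxi t ht).1 (by simpa only [hx_line] using hx)
  have hu_box := hline_box u (mem_Ico.2 ⟨hu, by omega⟩)
  have hu1_box := hline_box (u + 1) (mem_Ico.2 ⟨by omega, hun⟩)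
  constructor
  · intro huA
    by_contra hu1A
    rcases hW _ huA _ hu1_box hu1A (nnAdj_update_add_one _ i u) with h | h <;>
      exact hzW (hline_W _ h)
  · intro hu1A
    by_contra huA
    rcases hW _ hu1A _ hu_box huA (nnAdj_comm.1 (nnAdj_update_add_one _ i u)) with h | h <;>
      exact hzW (hline_W _ h)

theorem isoperimetric_boxF (hd : 2 ≤ d) {A W : Finset (Pt d)} (hA : A ⊆ boxF d n)
    (hA2 : 2 * #A ≤ n ^ d)
    (hW : ∀ x ∈ A, ∀ y ∈ boxF d n, y ∉ A → nnAdj x y → x ∈ W ∨ y ∈ W) :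
    1 / (2 * (d : ℝ)) * (#A : ℝ) ^ (1 - 1 / (d : ℝ)) ≤ #W := by
  rcases A.eq_empty_or_nonempty with rfl | hne
  · have : (1 : ℝ) / d < 1 := by
      rw [div_lt_one (by positivity)]; exact_mod_cast (by omega : 1 < d)
    rw [card_empty, Nat.cast_zero, Real.zero_rpow (by linarith), mul_zero]
    positivity
  have hn : 0 < n := by
    obtain ⟨x, hx⟩ := hne
    have := (mem_boxF.1 (hA hx)) ⟨0, by omega⟩
    omega
  have : Nonempty (Fin d) := ⟨⟨0, by omega⟩⟩
  obtain ⟨i, hproj⟩ := exists_rpow_le_card_image_eraseCoord A hne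
  rw [Fintype.card_fin] at hproj
  have hfull : (#(fullLines n i A) : ℝ) ≤ #A / n := by
    rw [le_div_iff₀ (by positivity)]; exact_mod_cast card_fullLines_mul_le i A
  have hcover : #(A.image (eraseCoord i)) ≤ #W + #(fullLines n i A) :=
    card_le_card_sdiff_add_card.trans <| Nat.add_le_add_right
      ((card_le_card (image_eraseCoord_sdiff_fullLines_subset hA hW i)).trans card_image_le) _
  have hnum := div_le_one_sub_mul_rpow (d := d) (by omega) hn (Nat.cast_nonneg (α := ℝ) #A)
    (by exact_mod_cast hA2)
  have : (#(A.image (eraseCoord i)) : ℝ) ≤ #W + #(fullLines n i A) := by exact_mod_cast hcover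
  linarith

theorem min_rpow_le_of_separates (hd : 2 ≤ d) {A W : Finset (Pt d)} {C D : Set (Pt d)}
    (hA : A ⊆ boxF d n) (hC : C ⊆ A) (hD : D ⊆ ↑(boxF d n \ A))
    (hW : ∀ x ∈ A, ∀ y ∈ boxF d n, y ∉ A → nnAdj x y → x ∈ W ∨ y ∈ W) :
    1 / (2 * (d : ℝ)) *
        min ((C.ncard : ℝ) ^ (1 - 1 / (d : ℝ))) ((D.ncard : ℝ) ^ (1 - 1 / (d : ℝ))) ≤ #W := by
  have hmono : ∀ (S : Set (Pt d)) (B : Finset (Pt d)), S ⊆ B →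
      (S.ncard : ℝ) ^ (1 - 1 / (d : ℝ)) ≤ (#B : ℝ) ^ (1 - 1 / (d : ℝ)) := fun S B hSB => by
    have hcard := Set.ncard_le_ncard hSB B.finite_toSet
    rw [Set.ncard_coe_finset] at hcard
    have hexp : (0 : ℝ) ≤ 1 - 1 / d := by
      rw [sub_nonneg, div_le_one (by positivity)]; exact_mod_cast (by omega : 1 ≤ d)
    exact Real.rpow_le_rpow (by positivity) (by exact_mod_cast hcard) hexp
  have hcard_sum : #A + #(boxF d n \ A) = n ^ d := by
    rw [card_sdiff_of_subset hA, card_boxF,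
      Nat.add_sub_cancel' (card_boxF (d := d) ▸ card_le_card hA)]
  rcases le_or_gt (2 * #A) (n ^ d) with hA2 | hA2
  · refine le_trans ?_ (isoperimetric_boxF hd hA hA2 hW)
    gcongr
    exact (min_le_left _ _).trans (hmono _ _ hC)
  · refine le_trans ?_ (isoperimetric_boxF hd (sdiff_subset (s := boxF d n) (t := A)) (by omega)
      fun x hx y hy hyA hxy => ?_)
    · gcongr
      exact (min_le_right _ _).trans (hmono _ _ hD)
    · have hyA : y ∈ A := by simpa [hy] using hyA
      exact (hW y hyA x (mem_sdiff.1 hx).1 (mem_sdiff.1 hx).2 (nnAdj_comm.1 hxy)).symm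

end Box

theorem stmt3_general (d n : ℕ) (hd : 2 ≤ d) (C D E : Set (Pt d))
    (hCbox : C ⊆ {x | inBox d n x}) (hDbox : D ⊆ {x | inBox d n x})
    (hEbox : E ⊆ {x | inBox d n x})
    (hsep : ∀ (k : ℕ) (p : ℕ → Pt d), p 0 ∈ C → p k ∈ D →
      (∀ j < k, nnAdj (p j) (p (j+1))) → (∀ j ≤ k, inBox d n (p j)) →
      ∃ j ≤ k, p j ∈ E ∧ p j ∉ C ∪ D) :
    (1/(2*(d:ℝ))) * min ((C.ncard : ℝ) ^ (1 - 1/(d:ℝ))) ((D.ncard : ℝ) ^ (1 - 1/(d:ℝ)))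
      ≤ (E.ncard : ℝ) := by
  classical
  set good : Pt d → Prop := fun x => inBox d n x ∧ (x ∈ E → x ∈ C ∪ D)
  set step : Pt d → Pt d → Prop := fun a b => nnAdj a b ∧ good b
  set A := (boxF d n).filter fun x => ∃ c ∈ C, Relation.ReflTransGen step c x
  have hEfin : E.Finite := (boxF d n).finite_toSet.subset fun x hx => mem_boxF.2 (hEbox hx)
  rw [Set.ncard_eq_toFinset_card E hEfin]
  refine min_rpow_le_of_separates hd (A := A) (filter_subset _ _)
    (fun c hc => mem_filter.2 ⟨mem_boxF.2 (hCbox hc), c, hc, .refl⟩) (fun x hx => ?_)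
    fun x hx y hy hyA hxy => Or.inr ?_
  · refine mem_sdiff.2 ⟨mem_boxF.2 (hDbox hx), fun hxA => ?_⟩
    obtain ⟨c, hc, hcx⟩ := (mem_filter.1 hxA).2
    obtain ⟨k, p, rfl, rfl, hp⟩ := hcx.exists_seq
    have hgood : ∀ j ≤ k, good (p j) := fun j hj => by
      cases j with
      | zero => exact ⟨hCbox hc, fun _ => Or.inl hc⟩
      | succ j => exact (hp j hj).2
    obtain ⟨j, hj, hjE, hjCD⟩ := hsep k p hc hx (fun j hj => (hp j hj).1) fun j hj => (hgood j hj).1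
    exact hjCD ((hgood j hj).2 hjE)
  · by_contra hyE
    obtain ⟨c, hc, hcx⟩ := (mem_filter.1 hx).2
    exact hyA (mem_filter.2 ⟨hy, c, hc, hcx.tail ⟨hxy, mem_boxF.1 hy, fun h => absurd
      (hEfin.mem_toFinset.2 h) hyE⟩⟩)

/-- If `C, D, E ⊆ B_n`, with `C` and `D` nonempty, connected and
disjoint, and `E` properly separates `C` and `D` in `B_n` (every nearest-neighbour path
in the box from `C` to `D` meets `E` at a point outside `C ∪ D`), then
`|E| ≥ (1/(2d)) · min(|C|^{1-1/d}, |D|^{1-1/d})`. -/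
theorem stmt3 (d n : ℕ) (hd : 2 ≤ d) (C D E : Set (Pt d))
    (hCbox : C ⊆ {x | inBox d n x}) (hDbox : D ⊆ {x | inBox d n x})
    (hEbox : E ⊆ {x | inBox d n x})
    (hCne : C.Nonempty) (hDne : D.Nonempty)
    (hCconn : connSet C) (hDconn : connSet D)
    (hCD : Disjoint C D)
    (hsep : ∀ (k : ℕ) (p : ℕ → Pt d), p 0 ∈ C → p k ∈ D →
      (∀ j < k, nnAdj (p j) (p (j+1))) → (∀ j ≤ k, inBox d n (p j)) →
      ∃ j ≤ k, p j ∈ E ∧ p j ∉ C ∪ D) :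
    (1/(2*(d:ℝ))) * min ((C.ncard : ℝ) ^ (1 - 1/(d:ℝ))) ((D.ncard : ℝ) ^ (1 - 1/(d:ℝ)))
      ≤ (E.ncard : ℝ) :=
  stmt3_general d n hd C D E hCbox hDbox hEbox hsep
end

section
/- If C ⊆ Z^d is finite and connected in the l∞-adjacency graph L, then its exterior boundary ∂_ext(C) — the set of sites v ∉ C that are L-adjacent to some w ∈ C and from which there is a nearest-neighbour path to infinity disjoint from C — is connected in the nearest-neighbour graph on Z^d. -/
open MeasureTheory ProbabilityTheory Filter

/-- `ℒ`-adjacency (sup-norm adjacency): `x ≠ y` and `max_i |x_i - y_i| = 1`. -/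
def lAdj {d : ℕ} (x y : Pt d) : Prop := x ≠ y ∧ ∀ i, (x i - y i).natAbs ≤ 1

/-- A set of sites is connected in the `ℒ` (sup-norm adjacency) graph. -/
def lConnSet {d : ℕ} (A : Set (Pt d)) : Prop :=
  ∀ x ∈ A, ∀ y ∈ A, Relation.ReflTransGen (fun a b => lAdj a b ∧ a ∈ A ∧ b ∈ A) x y

/-- `E` separates `C` and `D`: every finite nearest-neighbour path from a point of `C`
to a point of `D` intersects `E`. -/
def separates {d : ℕ} (E C D : Set (Pt d)) : Prop :=
  ∀ (k : ℕ) (p : ℕ → Pt d), p 0 ∈ C → p k ∈ D →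
    (∀ j < k, nnAdj (p j) (p (j+1))) → ∃ j ≤ k, p j ∈ E

/-!
Let `A` be a nearest-neighbour component of the exterior boundary `∂C`, and let `φ` be the
integer 1-cochain counting oriented edges from `C` into `A`. Within `ℒ`-distance one of a site of
`C`, two adjacent sites outside `C` are either both in `∂C` or both not (a ray from one extends to
a ray from the other), so there `φ` is the coboundary of the indicator `𝟙_A`; away from `C` it
vanishes. Hence `φ` is closed on every plaquette, and therefore `φ = df` for some `f : ℤ^d → ℤ`.
Now `f - 𝟙_A` is constant on every `ℒ`-ball around a site of `C`, so by `ℒ`-connectedness it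
takes a single value on `C ∪ ∂C`. On the other hand `f` is constant on `∂C`: for `d ≥ 2` all sites
that reach infinity outside the finite set `C` are connected outside `C`, where `φ = 0`. So `𝟙_A`
is constant on `∂C`, i.e. `A = ∂C`.
-/

open Function Finset

section Exactness

variable {ι M G : Type*} [DecidableEq ι] [AddCommGroup G]

lemma Finset.piecewise_insert_zero [AddZeroClass M] {s : Finset ι} {k : ι} (hk : k ∉ s)
    (x : ι → M) : (insert k s).piecewise x 0 = s.piecewise x 0 + Pi.single k (x k) := by
  ext m
  rcases eq_or_ne m k with rfl | hm <;> by_cases m ∈ s <;> simp_all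

lemma Finset.piecewise_add_single_zero [AddZeroClass M] (s : Finset ι) (x : ι → M) (i : ι) (a : M) :
    s.piecewise (x + Pi.single i a) (0 : ι → M)
      = s.piecewise x 0 + if i ∈ s then Pi.single i a else 0 := by
  ext m
  by_cases i ∈ s <;> rcases eq_or_ne m i with rfl | hm <;> by_cases m ∈ s <;> simp_all

noncomputable def intPrimitive (g : ℤ → G) (n : ℤ) : G := ∑ t ∈ Ico 0 n, g t - ∑ t ∈ Ico n 0, g t

@[simp] lemma intPrimitive_zero (g : ℤ → G) : intPrimitive g 0 = 0 := by simp [intPrimitive]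

lemma intPrimitive_add_one (g : ℤ → G) (n : ℤ) :
    intPrimitive g (n + 1) = intPrimitive g n + g n := by
  rw [intPrimitive, intPrimitive]
  rcases le_or_gt 0 n with hn | hn
  · rw [Ico_eq_empty_of_le hn, Ico_eq_empty_of_le (by omega : (0 : ℤ) ≤ n + 1),
      ← sum_Ico_add_eq_sum_Ico_add_one hn]
    abel
  · rw [Ico_eq_empty_of_le hn.le, Ico_eq_empty_of_le (by omega : n + 1 ≤ 0),
      ← insert_Ico_add_one_left_eq_Ico hn, sum_insert (by simp)]
    abel

-- `ω x i` is the value of a 1-form on the edge from `x` to `x + eᵢ`; `hω` below says that its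
-- circulation around every plaquette vanishes.
variable (ω : (ι → ℤ) → ι → G)

noncomputable def segmentIntegral (y : ι → ℤ) (k : ι) : ℤ → G :=
  intPrimitive fun n => ω (y + Pi.single k n) k

variable {ω}
variable (hω : ∀ x i j, ω x i + ω (x + Pi.single i 1) j = ω x j + ω (x + Pi.single j 1) i)
include hω

lemma segmentIntegral_add_single (y : ι → ℤ) (k j : ι) (n : ℤ) :
    segmentIntegral ω (y + Pi.single j 1) k n =
      segmentIntegral ω y k n + ω (y + Pi.single k n) j - ω y j := by
  -- By `hω` both sides have the same increments in `n`, and they agree at `n = 0`.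
  have hper : Periodic (fun n => segmentIntegral ω (y + Pi.single j 1) k n
      - (segmentIntegral ω y k n + ω (y + Pi.single k n) j)) 1 := by
    intro n
    simp only [segmentIntegral, intPrimitive_add_one]
    rw [Pi.single_add, ← add_assoc y, add_assoc (intPrimitive _ n), hω, add_right_comm y]
    abel
  have := hper.int_mul_eq n
  simp only [Int.cast_id, mul_one, segmentIntegral, intPrimitive_zero, Pi.single_zero, add_zero,
    zero_add, sub_eq_iff_eq_add] at this
  rw [segmentIntegral, segmentIntegral, this]
  abel

/-- Integrating along the staircase path that moves the coordinates in `s` one after the other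
gives a potential for `ω` in the directions of `s`. -/
lemma exists_potential_on (s : Finset ι) : ∃ f : (ι → ℤ) → G, ∀ x i,
    f (x + Pi.single i 1) = f x + if i ∈ s then ω (s.piecewise x 0) i else 0 := by
  induction s using Finset.induction_on with
  | empty => exact ⟨0, by simp⟩
  | insert k s hk ih =>
    obtain ⟨f, hf⟩ := ih
    refine ⟨fun x => f x + segmentIntegral ω (s.piecewise x 0) k (x k), fun x i => ?_⟩
    dsimp only
    rw [hf, piecewise_add_single_zero s x i, Pi.add_apply, piecewise_insert_zero hk]
    rcases eq_or_ne i k with rfl | hik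
    · rw [if_neg hk, if_neg hk, add_zero, add_zero, Pi.single_eq_same, segmentIntegral,
        intPrimitive_add_one, if_pos (mem_insert_self i s)]
      abel
    by_cases hi : i ∈ s
    · rw [if_pos hi, if_pos hi, Pi.single_eq_of_ne' hik, add_zero,
        segmentIntegral_add_single hω, if_pos (mem_insert_of_mem hi)]
      abel
    · rw [if_neg hi, if_neg hi, Pi.single_eq_of_ne' hik, add_zero, add_zero, add_zero,
        if_neg (by simp [hi, hik]), add_zero]

theorem exists_potential_of_closed [Fintype ι] :
    ∃ f : (ι → ℤ) → G, ∀ x i, f (x + Pi.single i 1) = f x + ω x i := by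
  obtain ⟨f, hf⟩ := exists_potential_on hω univ
  exact ⟨f, by simpa using hf⟩

end Exactness

variable {d : ℕ}

lemma nnAdj_symm {x y : Pt d} (h : nnAdj x y) : nnAdj y x := by
  simpa only [nnAdj, ← Int.natAbs_neg (x _ - y _), neg_sub] using h

lemma nnAdj_update {x : Pt d} {i : Fin d} {v : ℤ} (h : (x i - v).natAbs = 1) :
    nnAdj x (update x i v) := by
  rw [nnAdj, Finset.sum_eq_single i (fun j _ hj => by simp [hj]) (by simp)]
  simpa using h

lemma nnAdj_add_single (x : Pt d) (i : Fin d) : nnAdj x (x + Pi.single i 1) := by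
  rw [nnAdj, Finset.sum_eq_single i (fun j _ hj => by simp [hj]) (by simp)]
  simp

lemma exists_eq_add_single_of_nnAdj {x y : Pt d} (h : nnAdj x y) :
    ∃ i, y = x + Pi.single i 1 ∨ x = y + Pi.single i 1 := by
  rw [nnAdj] at h
  obtain ⟨i, hi⟩ : ∃ i, (x i - y i).natAbs ≠ 0 := by
    by_contra! h0
    simp [h0] at h
  have hle := Finset.single_le_sum (f := fun k => (x k - y k).natAbs)
    (fun _ _ => Nat.zero_le _) (Finset.mem_univ i)
  have hrest : ∀ j ≠ i, x j = y j := by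
    intro j hj
    have := Finset.add_le_sum (f := fun k => (x k - y k).natAbs) (fun _ _ => Nat.zero_le _)
      (Finset.mem_univ i) (Finset.mem_univ j) hj.symm
    omega
  refine ⟨i, ?_⟩
  rcases Int.natAbs_eq_iff.mp (by omega : (x i - y i).natAbs = 1) with h1 | h1
  · right; ext j; rcases eq_or_ne j i with rfl | hj <;> simp [*]; omega
  · left; ext j; rcases eq_or_ne j i with rfl | hj <;> simp [*]; omega

theorem exists_potential_of_nnAdj {G : Type*} [AddCommGroup G] (φ : Pt d → Pt d → G)
    (hanti : ∀ a b, φ b a = -φ a b)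
    (hφ : ∀ x i j,
      φ x (x + Pi.single i 1) + φ (x + Pi.single i 1) (x + Pi.single i 1 + Pi.single j 1)
        = φ x (x + Pi.single j 1) + φ (x + Pi.single j 1) (x + Pi.single j 1 + Pi.single i 1)) :
    ∃ f : Pt d → G, ∀ a b, nnAdj a b → f b - f a = φ a b := by
  obtain ⟨f, hf⟩ := exists_potential_of_closed (ω := fun x i => φ x (x + Pi.single i 1)) hφ
  refine ⟨f, fun a b hab => ?_⟩
  obtain ⟨i, rfl | rfl⟩ := exists_eq_add_single_of_nnAdj hab
  · rw [hf]; abel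
  · rw [hf, hanti]; abel

def NNJoinedIn (S : Set (Pt d)) : Pt d → Pt d → Prop :=
  Relation.ReflTransGen fun a b => nnAdj a b ∧ a ∈ S ∧ b ∈ S

section NNJoinedIn

variable {S T : Set (Pt d)} {x y z : Pt d}

lemma NNJoinedIn.trans (hxy : NNJoinedIn S x y) (hyz : NNJoinedIn S y z) : NNJoinedIn S x z :=
  Relation.ReflTransGen.trans hxy hyz

lemma NNJoinedIn.symm (h : NNJoinedIn S x y) : NNJoinedIn S y x := by
  induction h with
  | refl => exact .refl
  | tail _ hab ih => exact ih.head ⟨nnAdj_symm hab.1, hab.2.2, hab.2.1⟩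

lemma NNJoinedIn.mono (hST : S ⊆ T) (h : NNJoinedIn S x y) : NNJoinedIn T x y :=
  Relation.ReflTransGen.mono (fun _ _ hab => ⟨hab.1, hST hab.2.1, hST hab.2.2⟩) _ _ h

lemma NNJoinedIn.eq_of_forall {α : Type*} {F : Pt d → α}
    (hF : ∀ a b, nnAdj a b → a ∈ S → b ∈ S → F a = F b) (h : NNJoinedIn S x y) : F x = F y := by
  induction h with
  | refl => rfl
  | tail _ hab ih => exact ih.trans (hF _ _ hab.1 hab.2.1 hab.2.2)

lemma nnJoinedIn_update_of_le {j : Fin d} {v : ℤ} (hv : z j ≤ v)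
    (h : ∀ w ∈ Set.Icc (z j) v, update z j w ∈ S) : NNJoinedIn S z (update z j v) := by
  induction v, hv using Int.leInduction with
  | base => rw [update_eq_self]; exact .refl
  | succ v hv ih =>
    refine (ih fun w hw => h w ⟨hw.1, hw.2.trans (by omega)⟩).tail
      ⟨?_, h v ⟨hv, by omega⟩, h _ ⟨by omega, le_rfl⟩⟩
    simpa using nnAdj_update (x := update z j v) (i := j) (v := v + 1) (by simp)

lemma nnJoinedIn_update {j : Fin d} {v : ℤ} (h : ∀ w ∈ Set.uIcc (z j) v, update z j w ∈ S) :
    NNJoinedIn S z (update z j v) := by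
  rcases le_total (z j) v with hv | hv
  · exact nnJoinedIn_update_of_le hv fun w hw => h w (Set.Icc_subset_uIcc hw)
  · have := nnJoinedIn_update_of_le (z := update z j v) (j := j) (v := z j) (by simpa)
      fun w hw => by simpa using h w (Set.Icc_subset_uIcc' (by simpa using hw))
    simpa using this.symm

lemma nnJoinedIn_of_pi_uIcc_subset (h : Set.univ.pi (fun k => Set.uIcc (x k) (y k)) ⊆ S) :
    NNJoinedIn S x y := by
  suffices ∀ s : Finset (Fin d), NNJoinedIn S x (s.piecewise y x) by simpa using this univ
  intro s
  induction s using Finset.induction_on with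
  | empty => simpa using .refl
  | insert j s hj ih =>
    rw [Finset.piecewise_insert]
    refine ih.trans (nnJoinedIn_update fun w hw => h fun k _ => ?_)
    rcases eq_or_ne k j with rfl | hk
    · simpa [hj] using hw
    · rw [update_of_ne hk]
      by_cases k ∈ s <;> simp [*, Finset.piecewise]

end NNJoinedIn

def outsideBox (R : ℤ) : Set (Pt d) := {z | ∃ k, R < |z k|}

lemma nnJoinedIn_outsideBox_of_eq {R : ℤ} {x y : Pt d} {k : Fin d} (hk : R < |x k|)
    (hxy : x k = y k) : NNJoinedIn (outsideBox R) x y :=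
  nnJoinedIn_of_pi_uIcc_subset fun z hz => by
    have : z k = x k := by simpa [← hxy] using hz k (Set.mem_univ _)
    exact ⟨k, this ▸ hk⟩

lemma nnJoinedIn_outsideBox (hd : 2 ≤ d) {R : ℤ} {x y : Pt d} (hx : x ∈ outsideBox R)
    (hy : y ∈ outsideBox R) : NNJoinedIn (outsideBox R) x y := by
  have : Nontrivial (Fin d) := Fin.nontrivial_iff_two_le.mpr hd
  let T : Pt d := fun _ => |R| + 1
  have hT : R < |R| + 1 := by linarith [le_abs_self R]
  -- Move every coordinate but a far one `k` to that of `T`, then move `k` while the coordinate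
  -- `j ≠ k` stays far.
  suffices h : ∀ x ∈ outsideBox R, NNJoinedIn (outsideBox R) x T from
    (h x hx).trans (h y hy).symm
  rintro x ⟨k, hk⟩
  obtain ⟨j, hjk⟩ := exists_ne k
  refine (nnJoinedIn_outsideBox_of_eq (y := update T k (x k)) hk (by simp)).trans
    (nnJoinedIn_outsideBox_of_eq (k := j) ?_ (by simp [hjk]))
  rwa [update_of_ne hjk, abs_of_pos (by positivity)]

def HasRay (C : Set (Pt d)) (v : Pt d) : Prop :=
  ∃ p : ℕ → Pt d, p 0 = v ∧ Function.Injective p ∧ (∀ n, nnAdj (p n) (p (n+1))) ∧ ∀ n, p n ∉ C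

section HasRay

variable {C : Set (Pt d)} {u v : Pt d}

lemma HasRay.of_nnAdj (h : HasRay C u) (hvu : nnAdj v u) (hv : v ∉ C) : HasRay C v := by
  obtain ⟨p, rfl, hinj, hadj, hC⟩ := h
  by_cases hvp : ∃ m, p m = v
  · obtain ⟨m, rfl⟩ := hvp
    refine ⟨fun n => p (n + m), by simp, hinj.comp (add_left_injective m), fun n => ?_,
      fun n => hC _⟩
    simpa [add_right_comm n 1 m] using hadj (n + m)
  · push Not at hvp
    refine ⟨fun n => Nat.casesOn n v p, rfl, fun m n hmn => ?_, fun n => ?_, fun n => ?_⟩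
    · cases m <;> cases n <;> simp_all [hinj.eq_iff, eq_comm]
    · cases n <;> simp_all
    · cases n <;> simp_all

lemma HasRay.exists_nnJoinedIn_notMem {F : Set (Pt d)} (hF : F.Finite) (h : HasRay C v) :
    ∃ w ∉ F, NNJoinedIn Cᶜ v w := by
  obtain ⟨p, rfl, hinj, hadj, hC⟩ := h
  have hjoin : ∀ m, NNJoinedIn Cᶜ (p 0) (p m) := fun m => by
    induction m with
    | zero => exact .refl
    | succ m ih => exact ih.tail ⟨hadj m, hC m, hC (m + 1)⟩
  obtain ⟨_, ⟨m, rfl⟩, hm⟩ := ((Set.infinite_range_of_injective hinj).sdiff hF).nonempty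
  exact ⟨p m, hm, hjoin m⟩

lemma nnJoinedIn_compl_of_hasRay (hd : 2 ≤ d) (hfin : C.Finite) (hu : HasRay C u)
    (hv : HasRay C v) : NNJoinedIn Cᶜ u v := by
  obtain ⟨R, hR⟩ := ((hfin.prod Set.finite_univ).image fun p : Pt d × Fin d => |p.1 p.2|).bddAbove
  have hfar : outsideBox R ⊆ Cᶜ := fun z ⟨k, hk⟩ hz =>
    (hR ⟨(z, k), ⟨hz, trivial⟩, rfl⟩).not_gt hk
  have hbox : (outsideBox R : Set (Pt d))ᶜ.Finite :=
    (Set.finite_Icc (fun _ => -R) fun _ => R).subset fun z hz => by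
      simp only [outsideBox, Set.mem_compl_iff, Set.mem_ofPred, not_exists, not_lt] at hz
      exact ⟨fun k => (abs_le.mp (hz k)).1, fun k => (abs_le.mp (hz k)).2⟩
  obtain ⟨u', hu', huu'⟩ := hu.exists_nnJoinedIn_notMem hbox
  obtain ⟨v', hv', hvv'⟩ := hv.exists_nnJoinedIn_notMem hbox
  have hu'v' := nnJoinedIn_outsideBox hd (not_not.mp hu') (not_not.mp hv')
  exact huu'.trans ((hu'v'.mono hfar).trans hvv'.symm)

end HasRay

def extBoundary (C : Set (Pt d)) : Set (Pt d) := {v | v ∉ C ∧ (∃ w ∈ C, lAdj v w) ∧ HasRay C v}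

def lBall (m : Pt d) : Set (Pt d) := {y | ∀ i, (y i - m i).natAbs ≤ 1}

lemma nnJoinedIn_lBall {m x : Pt d} (hx : x ∈ lBall m) : NNJoinedIn (lBall m) x m :=
  nnJoinedIn_of_pi_uIcc_subset fun z hz k => by
    have := hx k
    have : x k ≤ z k ∧ z k ≤ m k ∨ m k ≤ z k ∧ z k ≤ x k := Set.mem_uIcc.mp (hz k trivial)
    omega

def unitCube (x : Pt d) : Set (Pt d) := {v | ∀ k, x k ≤ v k ∧ v k ≤ x k + 1}

lemma unitCube_subset_lBall {x m : Pt d} (hm : m ∈ unitCube x) : unitCube x ⊆ lBall m :=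
  fun v hv k => by
    have := hv k
    have := hm k
    omega

noncomputable def flux (C A : Set (Pt d)) (a b : Pt d) : ℤ :=
  C.indicator 1 a * A.indicator 1 b - C.indicator 1 b * A.indicator 1 a

section flux

variable {C A : Set (Pt d)} {a b m : Pt d}

lemma flux_eq_zero (ha : a ∉ C) (hb : b ∉ C) : flux C A a b = 0 := by
  simp [flux, ha, hb]

lemma flux_eq_sub (hAC : Disjoint A C) (h : a ∉ C → b ∉ C → (a ∈ A ↔ b ∈ A)) :
    flux C A a b = A.indicator 1 b - A.indicator 1 a := by
  by_cases ha : a ∈ C <;> by_cases hb : b ∈ C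
  · simp [flux, ha, hb, hAC.notMem_of_mem_right]
  · simp [flux, ha, hb, hAC.notMem_of_mem_right]
  · simp [flux, ha, hb, hAC.notMem_of_mem_right]
  · by_cases haA : a ∈ A
    · simp [flux, ha, hb, haA, (h ha hb).mp haA]
    · simp [flux, ha, hb, haA, mt (h ha hb).mpr haA]

variable (hA : A ⊆ extBoundary C) (hAcl : ∀ a ∈ A, ∀ b ∈ extBoundary C, nnAdj a b → b ∈ A)
include hA hAcl

lemma flux_eq_sub_of_mem_lBall (hm : m ∈ C) (ha : a ∈ lBall m) (hb : b ∈ lBall m)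
    (hab : nnAdj a b) : flux C A a b = A.indicator 1 b - A.indicator 1 a := by
  have step : ∀ {a b}, b ∈ lBall m → nnAdj a b → b ∉ C → a ∈ A → b ∈ A :=
    fun hb hab hbC haA => hAcl _ haA _
      ⟨hbC, ⟨m, hm, fun h => hbC (h ▸ hm), hb⟩, (hA haA).2.2.of_nnAdj (nnAdj_symm hab) hbC⟩ hab
  refine flux_eq_sub (Set.disjoint_left.mpr fun x hx => (hA hx).1) fun haC hbC =>
    ⟨step hb hab hbC, step ha (nnAdj_symm hab) haC⟩

lemma flux_closed (x : Pt d) (i j : Fin d) :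
    flux C A x (x + Pi.single i 1)
        + flux C A (x + Pi.single i 1) (x + Pi.single i 1 + Pi.single j 1)
      = flux C A x (x + Pi.single j 1)
        + flux C A (x + Pi.single j 1) (x + Pi.single j 1 + Pi.single i 1) := by
  rcases eq_or_ne i j with rfl | hij
  · rfl
  rw [add_right_comm x (Pi.single j 1)]
  obtain ⟨hp, hq, hr, hs⟩ : x ∈ unitCube x ∧ x + Pi.single i 1 ∈ unitCube x ∧
      x + Pi.single j 1 ∈ unitCube x ∧ x + Pi.single i 1 + Pi.single j 1 ∈ unitCube x := by
    refine ⟨?_, ?_, ?_, ?_⟩ <;> intro k <;> rcases eq_or_ne k i with rfl | hki <;>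
      simp [Pi.single_apply, *] <;> split_ifs <;> simp
  have hrs : nnAdj (x + Pi.single j 1) (x + Pi.single i 1 + Pi.single j 1) :=
    add_right_comm x (Pi.single j 1) (Pi.single i 1) ▸ nnAdj_add_single _ i
  by_cases hcube : ∃ m ∈ C, m ∈ unitCube x
  · obtain ⟨m, hmC, hm⟩ := hcube
    have hball := unitCube_subset_lBall hm
    rw [flux_eq_sub_of_mem_lBall hA hAcl hmC (hball hp) (hball hq) (nnAdj_add_single _ _),
      flux_eq_sub_of_mem_lBall hA hAcl hmC (hball hq) (hball hs) (nnAdj_add_single _ _),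
      flux_eq_sub_of_mem_lBall hA hAcl hmC (hball hp) (hball hr) (nnAdj_add_single _ _),
      flux_eq_sub_of_mem_lBall hA hAcl hmC (hball hr) (hball hs) hrs]
    abel
  · have hout : ∀ v ∈ unitCube x, v ∉ C := fun v hv hvC => hcube ⟨v, hvC, hv⟩
    rw [flux_eq_zero (hout _ hp) (hout _ hq), flux_eq_zero (hout _ hq) (hout _ hs),
      flux_eq_zero (hout _ hp) (hout _ hr), flux_eq_zero (hout _ hr) (hout _ hs)]

theorem extBoundary_subset (hd : 2 ≤ d) (hfin : C.Finite) (hconn : lConnSet C)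
    (hne : A.Nonempty) : extBoundary C ⊆ A := by
  obtain ⟨u, hu⟩ := hne
  intro v hv
  obtain ⟨f, hf⟩ := exists_potential_of_nnAdj (flux C A) (fun a b => by simp [flux])
    (flux_closed hA hAcl)
  let F : Pt d → ℤ := fun x => f x - A.indicator 1 x
  have hFball : ∀ m ∈ C, ∀ x ∈ lBall m, F x = F m := fun m hm x hx =>
    (nnJoinedIn_lBall hx).eq_of_forall fun a b hab ha hb => by
      have := hf a b hab
      rw [flux_eq_sub_of_mem_lBall hA hAcl hm ha hb hab] at this
      simp only [F]; linarith
  have hFC : ∀ c ∈ C, ∀ c' ∈ C, F c = F c' := fun c hc c' hc' => by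
    have hcc' := hconn c hc c' hc'
    clear hc'
    induction hcc' with
    | refl => rfl
    | tail _ h ih => exact ih.trans (hFball _ h.2.2 _ h.1.2)
  have hf_eq : f u = f v := (nnJoinedIn_compl_of_hasRay hd hfin (hA hu).2.2 hv.2.2).eq_of_forall
    fun a b hab ha hb => by
      have := hf a b hab
      rw [flux_eq_zero ha hb] at this
      linarith
  obtain ⟨_, ⟨c, hc, hcu⟩, _⟩ := hA hu
  obtain ⟨_, ⟨c', hc', hc'v⟩, _⟩ := hv
  have := (hFball c hc u hcu.2).trans ((hFC c hc c' hc').trans (hFball c' hc' v hc'v.2).symm)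
  by_contra hvA
  simp [F, hu, hvA, hf_eq] at this

end flux

/-- Kesten's Lemma 2.23; first part of Lemma lemtop. If `C ⊆ ℤ^d` is
finite and `ℒ`-connected, then its exterior boundary — the sites `v ∉ C` that are
`ℒ`-adjacent to some `w ∈ C` and from which there is an infinite self-avoiding
nearest-neighbour path disjoint from `C` — is connected in the nearest-neighbour graph. -/
theorem stmt6 (d : ℕ) (hd : 2 ≤ d) (C : Set (Pt d)) (hfin : C.Finite)
    (hconn : lConnSet C) :
    connSet {v : Pt d | v ∉ C ∧ (∃ w ∈ C, lAdj v w) ∧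
      ∃ p : ℕ → Pt d, p 0 = v ∧ Function.Injective p ∧
        (∀ n, nnAdj (p n) (p (n+1))) ∧ ∀ n, p n ∉ C} := by
  intro u hu v hv
  let A := {w | w ∈ extBoundary C ∧ NNJoinedIn (extBoundary C) u w}
  exact (extBoundary_subset (A := A) (fun w hw => hw.1)
    (fun a ha b hb hab => ⟨hb, ha.2.tail ⟨hab, ha.1, hb⟩⟩) hd hfin hconn ⟨u, hu, .refl⟩ hv).2
end
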